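/- arXiv:1202.5782 — 4 statements merged into one kernel-verified Lean document; each statement's English description precedes it below -/
import Mathlib

section
/- Let M be an R-module and suppose that either R is an Artinian ring or M is a Noetherian R-module. Then Spec^s(M), with the second classical Zariski topology, is a T1-space if and only if either Spec^s(M) = ∅ or Spec^s(M) = Min(M), the set of all minimal submodules of M. -/
/-!
Every open set of the second classical Zariski topology is upward closed, so `S ⤳ T` holds
exactly when `T ≤ S`; hence `Spec^s(M)` is T1 iff no second submodule properly contains another.
If `R` is Artinian, or `M` is Noetherian (via Nakayama), the annihilator of a second submodule
`S` is a maximal ideal `p`, so `R ∙ x ≅ R ⧸ p` is a minimal submodule inside `S` for every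
nonzero `x ∈ S`. Minimal submodules are second, so in the T1 case every second submodule is
minimal, and conversely minimal submodules contain no smaller second submodule.
-/

open Pointwise

variable (R M : Type*) [CommRing R] [AddCommGroup M] [Module R M]

/-- A nonzero submodule `S` is *second* if for every `r : R`, `r • S = S` or `r • S = ⊥`. -/
def IsSecondSubmodule (S : Submodule R M) : Prop :=
  S ≠ ⊥ ∧ ∀ r : R, r • S = S ∨ r • S = ⊥

/-- The second spectrum of `M`: the collection of all second submodules of `M`. -/
def SecondSpec : Type _ := {S : Submodule R M // IsSecondSubmodule R M S}

/-- `V^{s*}(N)`: the set of second submodules contained in `N`. -/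
def Vs (N : Submodule R M) : Set (SecondSpec R M) := {S | S.1 ≤ N}

/-- `W^s(N)`: the complement of `V^{s*}(N)` in `Spec^s(M)`. -/
def Ws (N : Submodule R M) : Set (SecondSpec R M) := (Vs R M N)ᶜ

/-- The second classical Zariski topology on `Spec^s(M)`, generated by the
sub-basis `{W^s(N) : N ≤ M}`. -/
instance secondZariski : TopologicalSpace (SecondSpec R M) :=
  TopologicalSpace.generateFrom {U | ∃ N : Submodule R M, U = Ws R M N}

/-- The second socle of a submodule `N`: the sum of all second submodules of `M`
contained in `N`. -/
def secSocle (N : Submodule R M) : Submodule R M :=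
  sSup {S : Submodule R M | IsSecondSubmodule R M S ∧ S ≤ N}

variable {R M}

lemma Submodule.pointwise_smul_eq_bot_iff_mem_annihilator {r : R} {S : Submodule R M} :
    r • S = ⊥ ↔ r ∈ S.annihilator := by
  simp [Submodule.eq_bot_iff, Submodule.mem_smul_pointwise_iff_exists, Submodule.mem_annihilator]

lemma isAtom_span_singleton_of_isMaximal_le_torsionOf {I : Ideal R} (hI : I.IsMaximal)
    {x : M} (hx : x ≠ 0) (hIx : I ≤ Ideal.torsionOf R M x) : IsAtom (R ∙ x) := by
  have hmax : (Ideal.torsionOf R M x).IsMaximal := by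
    rwa [← hI.eq_of_le (by rwa [Ne, Ideal.torsionOf_eq_top_iff]) hIx]
  exact isSimpleModule_iff_isAtom.mp <| isSimpleModule_iff_quot_maximal.mpr
    ⟨_, hmax, ⟨(Ideal.quotTorsionOfEquivSpanSingleton R M x).symm⟩⟩

lemma IsAtom.isSecondSubmodule {S : Submodule R M} (hS : IsAtom S) :
    IsSecondSubmodule R M S := by
  refine ⟨hS.1, fun r => ?_⟩
  have hle : r • S ≤ S := by
    rintro _ ⟨y, hy, rfl⟩
    exact S.smul_mem r hy
  exact hle.lt_or_eq.symm.imp id (hS.2 _)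

namespace IsSecondSubmodule

variable {S : Submodule R M} (hS : IsSecondSubmodule R M S)
include hS

lemma pointwise_smul_eq_self_of_notMem_annihilator {r : R} (hr : r ∉ S.annihilator) :
    r • S = S :=
  (hS.2 r).resolve_right (mt Submodule.pointwise_smul_eq_bot_iff_mem_annihilator.mp hr)

lemma annihilator_ne_top : S.annihilator ≠ ⊤ := by
  rw [Ne, Submodule.annihilator_eq_top_iff]
  exact hS.1

lemma annihilator_isPrime : S.annihilator.IsPrime := by
  refine (Ideal.isPrime_iff).mpr ⟨hS.annihilator_ne_top, fun {a b} hab => ?_⟩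
  refine or_iff_not_imp_left.mpr fun ha => ?_
  rw [← Submodule.pointwise_smul_eq_bot_iff_mem_annihilator] at hab ⊢
  rw [← hS.pointwise_smul_eq_self_of_notMem_annihilator ha, smul_smul, mul_comm, hab]

lemma annihilator_isMaximal_of_fg (hfg : S.FG) : S.annihilator.IsMaximal := by
  refine Ideal.isMaximal_iff.mpr ⟨(Ideal.ne_top_iff_one _).mp hS.annihilator_ne_top,
    fun J c hJ hc hcJ => ?_⟩
  have hle : S ≤ Ideal.span {c} • S := by
    rw [Submodule.ideal_span_singleton_smul, hS.pointwise_smul_eq_self_of_notMem_annihilator hc]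
  obtain ⟨r, hr1, hrS⟩ :=
    Submodule.exists_sub_one_mem_and_smul_eq_zero_of_fg_of_le_smul _ S hfg hle
  have hrJ : r ∈ J := hJ (Submodule.mem_annihilator.mpr hrS)
  have hr1J : r - 1 ∈ J := (Ideal.span_singleton_le_iff_mem J).mpr hcJ hr1
  simpa using J.sub_mem hrJ hr1J

lemma annihilator_isMaximal (h : IsArtinianRing R ∨ IsNoetherian R M) :
    S.annihilator.IsMaximal := by
  rcases h with hR | hM
  · have := hS.annihilator_isPrime
    exact IsArtinianRing.isMaximal_of_isPrime _
  · exact hS.annihilator_isMaximal_of_fg (IsNoetherian.noetherian S)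

lemma exists_isAtom_le (h : IsArtinianRing R ∨ IsNoetherian R M) :
    ∃ A : Submodule R M, IsAtom A ∧ A ≤ S := by
  obtain ⟨x, hxS, hx⟩ := (Submodule.ne_bot_iff S).mp hS.1
  refine ⟨R ∙ x, isAtom_span_singleton_of_isMaximal_le_torsionOf (hS.annihilator_isMaximal h) hx
    fun r hr => ?_, (Submodule.span_singleton_le_iff_mem x S).mpr hxS⟩
  exact (Ideal.mem_torsionOf_iff x r).mpr (Submodule.mem_annihilator.mp hr x hxS)

end IsSecondSubmodule

namespace SecondSpec

lemma specializes_iff_le {S T : SecondSpec R M} : S ⤳ T ↔ T.1 ≤ S.1 := by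
  rw [specializes_iff_forall_open]
  constructor
  · intro h
    by_contra hTS
    exact h (Ws R M S.1) (TopologicalSpace.GenerateOpen.basic _ ⟨S.1, rfl⟩) hTS (le_refl S.1)
  · intro hTS U hU
    induction hU with
    | basic V hV =>
      obtain ⟨N, rfl⟩ := hV
      exact fun hT hS => hT (hTS.trans hS)
    | univ => exact fun _ => trivial
    | inter U V _ _ ihU ihV => exact fun hT => ⟨ihU hT.1, ihV hT.2⟩
    | sUnion 𝒰 _ ih =>
      rintro ⟨V, hV, hTV⟩
      exact ⟨V, hV, ih V hV hTV⟩

lemma t1Space_iff :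
    T1Space (SecondSpec R M) ↔ ∀ S T : Submodule R M,
      IsSecondSubmodule R M S → IsSecondSubmodule R M T → T ≤ S → T = S := by
  rw [t1Space_iff_specializes_imp_eq]
  constructor
  · intro h S T hS hT hTS
    exact congrArg Subtype.val (@h ⟨S, hS⟩ ⟨T, hT⟩ (specializes_iff_le.mpr hTS)).symm
  · rintro h ⟨S, hS⟩ ⟨T, hT⟩ hST
    exact Subtype.ext (h S T hS hT (specializes_iff_le.mp hST)).symm

end SecondSpec

variable (R M)

/-- Thm 2.12: If `R` is Artinian or `M` is Noetherian, then `Spec^s(M)` is a T1-space iff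
`Spec^s(M) = ∅` or `Spec^s(M) = Min(M)`, the set of minimal submodules of `M`. -/
theorem stmt5 (h : IsArtinianRing R ∨ IsNoetherian R M) :
    T1Space (SecondSpec R M) ↔
      ({S : Submodule R M | IsSecondSubmodule R M S} = ∅ ∨
        {S : Submodule R M | IsSecondSubmodule R M S} = {S : Submodule R M | IsAtom S}) := by
  rw [SecondSpec.t1Space_iff]
  constructor
  · refine fun hmin => Or.inr (Set.ext fun S => ⟨fun hS => ?_, IsAtom.isSecondSubmodule⟩)
    obtain ⟨A, hA, hAS⟩ := hS.exists_isAtom_le h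
    rwa [← hmin S A hS hA.isSecondSubmodule hAS]
  · rintro (hempty | hatoms) S T hS hT hTS
    · exact absurd hS (Set.eq_empty_iff_forall_notMem.mp hempty S)
    · have hS : IsAtom S := (Set.ext_iff.mp hatoms S).mp hS
      exact hTS.lt_or_eq.resolve_left fun hlt => hT.1 (hS.2 T hlt)
end

section
/- Let M be an R-module. Then the second classical Zariski topology on Spec^s(M) is the cofinite topology if and only if S.dim(M) ≤ 0 (there are no two second submodules S1 ⊊ S2) and for every submodule N of M, either V^{s*}(N) = Spec^s(M) or V^{s*}(N) is finite. -/
/-!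
A topology is the cofinite one exactly when it is T1 and every open set is empty or cofinite,
and for a topology generated by a sub-basis the second condition only has to be checked on the
sub-basis; for the second classical Zariski topology this is the condition on the `V^{s*}(N)`.
Every `W^s(N)` is upward closed under inclusion, so a second submodule specializes to every
second submodule it contains: the space can only be T1 if no two second submodules are
comparable. Conversely, in that case `{S} = V^{s*}(S)` is closed.
-/

open Pointwise

variable (R M : Type*) [CommRing R] [AddCommGroup M] [Module R M]

open Set Topology TopologicalSpace

section Cofinite

variable {X : Type*}

theorem isOpen_cofinite_iff {s : Set X} :
    IsOpen[TopologicalSpace.cofinite] s ↔ s = ∅ ∨ sᶜ.Finite := by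
  rw [or_iff_not_imp_left, ← ne_eq, ← nonempty_iff_ne_empty]
  rfl

theorem eq_cofinite_iff [t : TopologicalSpace X] :
    t = .cofinite ↔ ∀ U : Set X, IsOpen U ↔ (U = ∅ ∨ Uᶜ.Finite) := by
  simp only [TopologicalSpace.ext_iff, isOpen_cofinite_iff]

theorem t1Space_iff_le_cofinite [t : TopologicalSpace X] : T1Space X ↔ t ≤ .cofinite := by
  refine ⟨fun _ => TopologicalSpace.le_def.mpr fun U hU => ?_, fun h => ⟨fun x => ?_⟩⟩
  · rcases isOpen_cofinite_iff.mp hU with rfl | hfin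
    · exact isOpen_empty
    · simpa using hfin.isClosed.isOpen_compl
  · refine isOpen_compl_iff.mp (TopologicalSpace.le_def.mp h _ (isOpen_cofinite_iff.mpr ?_))
    simp

theorem generateFrom_eq_cofinite_iff [t : TopologicalSpace X] {g : Set (Set X)}
    (ht : t = generateFrom g) :
    t = .cofinite ↔ T1Space X ∧ ∀ s ∈ g, s = ∅ ∨ sᶜ.Finite := by
  rw [le_antisymm_iff, ← t1Space_iff_le_cofinite, ht, le_generateFrom_iff_subset_isOpen]
  simp only [subset_def, mem_ofPred_eq, isOpen_cofinite_iff]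

end Cofinite

section SecondSpec

variable {R M}

theorem isOpen_Ws (N : Submodule R M) : IsOpen (Ws R M N) :=
  GenerateOpen.basic _ ⟨N, rfl⟩

theorem isClosed_Vs (N : Submodule R M) : IsClosed (Vs R M N) :=
  isOpen_compl_iff.mp (isOpen_Ws N)

theorem SecondSpec.specializes_of_le {S T : SecondSpec R M} (h : S.1 ≤ T.1) : T ⤳ S := by
  simp_rw [Specializes, nhds_generateFrom, le_iInf₂_iff]
  rintro _ ⟨hS, N, rfl⟩
  exact iInf₂_le (Ws R M N) ⟨fun hT => hS (h.trans hT), N, rfl⟩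

theorem Vs_eq_singleton {S : SecondSpec R M}
    (hdim : ¬ ∃ S₁ S₂ : Submodule R M,
      IsSecondSubmodule R M S₁ ∧ IsSecondSubmodule R M S₂ ∧ S₁ < S₂) :
    Vs R M S.1 = {S} := by
  ext T
  refine ⟨fun hle => Subtype.ext ?_, by rintro rfl; exact le_refl T.1⟩
  by_contra hne
  exact hdim ⟨T.1, S.1, T.2, S.2, lt_of_le_of_ne hle hne⟩

theorem SecondSpec.t1Space_iff_s6 :
    T1Space (SecondSpec R M) ↔ ¬ ∃ S₁ S₂ : Submodule R M,
      IsSecondSubmodule R M S₁ ∧ IsSecondSubmodule R M S₂ ∧ S₁ < S₂ := by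
  refine ⟨fun _ => ?_, fun hdim => ⟨fun S => Vs_eq_singleton hdim ▸ isClosed_Vs S.1⟩⟩
  rintro ⟨S₁, S₂, h₁, h₂, hlt⟩
  have : (⟨S₂, h₂⟩ : SecondSpec R M) = ⟨S₁, h₁⟩ := (SecondSpec.specializes_of_le hlt.le).eq
  exact hlt.ne' (congrArg Subtype.val this)

end SecondSpec

/-- Thm 2.13: the second classical Zariski topology on `Spec^s(M)` is the cofinite
topology iff `S.dim M ≤ 0` and for every submodule `N`, `V^{s*}(N)` is the whole space
or finite. -/
theorem stmt6 :
    (∀ U : Set (SecondSpec R M), IsOpen U ↔ (U = ∅ ∨ Uᶜ.Finite)) ↔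
      ((¬ ∃ S₁ S₂ : Submodule R M,
          IsSecondSubmodule R M S₁ ∧ IsSecondSubmodule R M S₂ ∧ S₁ < S₂) ∧
        ∀ N : Submodule R M, Vs R M N = Set.univ ∨ (Vs R M N).Finite) := by
  rw [← eq_cofinite_iff, generateFrom_eq_cofinite_iff (t := secondZariski R M) rfl,
    SecondSpec.t1Space_iff_s6]
  refine and_congr_right' ⟨fun h N => ?_, fun h s ⟨N, hs⟩ => ?_⟩
  · simpa [Ws] using h _ ⟨N, rfl⟩
  · simpa [hs, Ws] using h N
end

section
/- Let M be an R-module with at least two second submodules. If Spec^s(M), with the second classical Zariski topology, is a Hausdorff space, then S.dim(M) = 0 (Spec^s(M) ≠ ∅ and there are no two second submodules S1 ⊊ S2), and there exist finitely many submodules N1, ..., Nn of M such that V^{s*}(Ni) ≠ Spec^s(M) for every i and Spec^s(M) = V^{s*}(N1) ∪ ... ∪ V^{s*}(Nn). -/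
/-!
Each subbasic open set `W^s(N)` is closed upwards under inclusion, so `S₁ ⊆ S₂` makes `S₂`
specialize to `S₁`, and in a T₁ space this forces `S₁ = S₂`. For the cover, separate two distinct
second submodules by disjoint basic open sets: these are finite intersections of sets `W^s(Nᵢ)`,
each nonempty, whose joint intersection is empty; its complement `⋃ V^{s*}(Nᵢ)` is everything.
-/

open Pointwise

variable (R M : Type*) [CommRing R] [AddCommGroup M] [Module R M]

open Filter TopologicalSpace

theorem specializes_generateFrom_iff {X : Type*} {g : Set (Set X)} {x y : X} :
    @Specializes X (generateFrom g) x y ↔ ∀ s ∈ g, y ∈ s → x ∈ s := by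
  let := generateFrom g
  rw [specializes_iff_pure, ← tendsto_id', tendsto_nhds_generateFrom_iff]
  rfl

theorem exists_nonempty_subbasic_iInter_eq_empty {X : Type*} [t : TopologicalSpace X] [T2Space X]
    {g : Set (Set X)} (hg : t = generateFrom g) {x y : X} (hxy : x ≠ y) :
    ∃ (n : ℕ) (s : Fin n → Set X), (∀ i, s i ∈ g) ∧ (∀ i, (s i).Nonempty) ∧ ⋂ i, s i = ∅ := by
  obtain ⟨U, V, hU, hV, hxU, hyV, hUV⟩ := t2_separation hxy
  have hbasis := isTopologicalBasis_of_subbasis hg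
  obtain ⟨_, ⟨F, ⟨hF, hFg⟩, rfl⟩, hxF, hFU⟩ := hbasis.exists_subset_of_mem_open hxU hU
  obtain ⟨_, ⟨G, ⟨hG, hGg⟩, rfl⟩, hyG, hGV⟩ := hbasis.exists_subset_of_mem_open hyV hV
  obtain ⟨n, s, hs⟩ := (hF.union hG).fin_embedding
  have hs_mem {i : Fin n} : s i ∈ F ∪ G := hs ▸ Set.mem_range_self i
  refine ⟨n, s, fun i => (Set.union_subset hFg hGg) hs_mem, fun i => ?_, ?_⟩
  · rcases hs_mem (i := i) with hi | hi
    exacts [⟨x, hxF _ hi⟩, ⟨y, hyG _ hi⟩]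
  · have : ⋂ i, s i = ⋂₀ F ∩ ⋂₀ G := by
      rw [← Set.sInter_union, ← hs, Set.sInter_range]
    rw [this, ← Set.subset_empty_iff, ← hUV.inter_eq]
    exact Set.inter_subset_inter hFU hGV

namespace SecondSpec

variable {R M : Type*} [CommRing R] [AddCommGroup M] [Module R M]

theorem specializes_of_le_s8 {S₁ S₂ : SecondSpec R M} (h : S₁.1 ≤ S₂.1) : S₂ ⤳ S₁ :=
  specializes_generateFrom_iff.2 <| by
    rintro _ ⟨N, rfl⟩ hS₁ hS₂
    exact hS₁ (h.trans hS₂)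

theorem eq_of_le [T1Space (SecondSpec R M)] {S₁ S₂ : SecondSpec R M} (h : S₁.1 ≤ S₂.1) :
    S₁ = S₂ :=
  (specializes_of_le_s8 h).eq.symm

theorem exists_cover_by_proper_Vs [T2Space (SecondSpec R M)] {S₁ S₂ : SecondSpec R M}
    (hne : S₁ ≠ S₂) :
    ∃ (n : ℕ) (N : Fin n → Submodule R M),
      (∀ i, Vs R M (N i) ≠ Set.univ) ∧ (⋃ i, Vs R M (N i)) = Set.univ := by
  obtain ⟨n, s, hs, hs_ne, hs_inter⟩ := exists_nonempty_subbasic_iInter_eq_empty rfl hne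
  choose N hN using hs
  refine ⟨n, N, fun i => ?_, ?_⟩
  · rw [Ne, ← Set.compl_empty_iff, ← Ws, ← hN]
    exact (hs_ne i).ne_empty
  · have : ⋃ i, Vs R M (N i) = (⋂ i, s i)ᶜ := by simp only [Set.compl_iInter, hN, Ws, compl_compl]
    rw [this, hs_inter, Set.compl_empty]

end SecondSpec

/-- Thm 2.19: if `M` has at least two second submodules and `Spec^s(M)` is Hausdorff,
then `S.dim M = 0` and `Spec^s(M)` is a finite union of proper `V^{s*}(Nᵢ)`'s. -/
theorem stmt8 (h2 : ∃ S₁ S₂ : SecondSpec R M, S₁ ≠ S₂)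
    (hT2 : T2Space (SecondSpec R M)) :
    ((∃ S : Submodule R M, IsSecondSubmodule R M S) ∧
      ¬ ∃ S₁ S₂ : Submodule R M,
          IsSecondSubmodule R M S₁ ∧ IsSecondSubmodule R M S₂ ∧ S₁ < S₂) ∧
      ∃ (n : ℕ) (N : Fin n → Submodule R M),
        (∀ i, Vs R M (N i) ≠ Set.univ) ∧ (⋃ i, Vs R M (N i)) = Set.univ := by
  obtain ⟨S₁, S₂, hne⟩ := h2
  refine ⟨⟨⟨S₁.1, S₁.2⟩, ?_⟩, SecondSpec.exists_cover_by_proper_Vs hne⟩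
  rintro ⟨A, B, hA, hB, hlt⟩
  have : (⟨A, hA⟩ : SecondSpec R M) = ⟨B, hB⟩ := SecondSpec.eq_of_le hlt.le
  exact hlt.ne (congrArg Subtype.val this)
end

section
/- Let M be an R-module having the descending chain condition on socle submodules (every descending chain of socle submodules of M stabilizes). Then Spec^s(M), equipped with the finer patch topology, is a compact space. -/
/-!
Noetherian induction on socle submodules shows that `V^{s*}(N)` is patch-compact for every `N`.
Since `V^{s*}(N) = V^{s*}(soc N)`, it suffices to treat an `N` all of whose proper submodules
have patch-compact `V^{s*}`. If `N` is not second, some `r` makes both `r • N` and the `r`-torsion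
of `N` proper, and every second submodule of `N` lies in one of them. If `N` is second, by
Alexander's subbasis theorem it suffices to refine a cover of `V^{s*}(N)` by subbasic sets: `N`
lies in one of them, `V^{s*}(A) ∩ W^s(K)`, and the second submodules of `N` it misses lie in
`V^{s*}(N ∩ K)`, where `N ∩ K < N`.
-/

open Pointwise

variable (R M : Type*) [CommRing R] [AddCommGroup M] [Module R M]

/-- The finer patch topology on `Spec^s(M)`, generated by the sub-basis
`{V^{s*}(N) ∩ W^s(K) : N, K ≤ M}`. -/
def patchTopology : TopologicalSpace (SecondSpec R M) :=
  TopologicalSpace.generateFrom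
    {U | ∃ N K : Submodule R M, U = Vs R M N ∩ Ws R M K}

section

variable {R M}

lemma secSocle_le (N : Submodule R M) : secSocle R M N ≤ N :=
  sSup_le fun _ hS => hS.2

lemma le_secSocle {S N : Submodule R M} (hS : IsSecondSubmodule R M S) (hSN : S ≤ N) :
    S ≤ secSocle R M N :=
  le_sSup ⟨hS, hSN⟩

lemma secSocle_secSocle (N : Submodule R M) :
    secSocle R M (secSocle R M N) = secSocle R M N :=
  (secSocle_le _).antisymm <| sSup_le fun _ hS => le_sSup ⟨hS.1, le_secSocle hS.1 hS.2⟩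

lemma mem_Vs {S : SecondSpec R M} {N : Submodule R M} : S ∈ Vs R M N ↔ S.1 ≤ N :=
  Iff.rfl

lemma Vs_secSocle (N : Submodule R M) : Vs R M (secSocle R M N) = Vs R M N :=
  Set.ext fun S => ⟨fun h => h.trans (secSocle_le N), le_secSocle S.2⟩

lemma Vs_mono {N N' : Submodule R M} (h : N ≤ N') : Vs R M N ⊆ Vs R M N' :=
  fun _ hS => le_trans hS h

lemma Vs_top : Vs R M ⊤ = Set.univ :=
  Set.eq_univ_of_forall fun _ => mem_Vs.2 le_top

lemma Vs_bot : Vs R M ⊥ = ∅ :=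
  Set.eq_empty_of_forall_notMem fun S hS => S.2.1 (le_bot_iff.mp hS)

lemma smul_eq_bot_iff_le_torsionBy (r : R) (N : Submodule R M) :
    r • N = ⊥ ↔ N ≤ Submodule.torsionBy R M r :=
  LinearMap.le_ker_iff_map.symm

lemma Vs_eq_Vs_smul_union_Vs_inf_torsionBy (r : R) (N : Submodule R M) :
    Vs R M N = Vs R M (r • N) ∪ Vs R M (N ⊓ Submodule.torsionBy R M r) := by
  refine (Set.union_subset (Vs_mono (Submodule.smul_le_self_of_tower r N))
    (Vs_mono inf_le_left)).antisymm' fun S hSN => ?_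
  rcases S.2.2 r with hS | hS
  · exact Or.inl (mem_Vs.2 (hS ▸ Submodule.map_mono hSN))
  · exact Or.inr (le_inf hSN ((smul_eq_bot_iff_le_torsionBy r S.1).mp hS))

lemma Vs_subset_Vs_inter_Ws_union_Vs_inf {N A : Submodule R M} (hNA : N ≤ A)
    (K : Submodule R M) : Vs R M N ⊆ (Vs R M A ∩ Ws R M K) ∪ Vs R M (N ⊓ K) := by
  intro S hSN
  by_cases hSK : S.1 ≤ K
  · exact Or.inr (le_inf hSN hSK)
  · exact Or.inl ⟨le_trans hSN hNA, hSK⟩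

lemma isCompact_Vs_of_isSecondSubmodule {N : Submodule R M} (hN : IsSecondSubmodule R M N)
    (ih : ∀ N' < N, @IsCompact _ (patchTopology R M) (Vs R M N')) :
    @IsCompact _ (patchTopology R M) (Vs R M N) := by
  let := patchTopology R M
  refine isCompact_generateFrom rfl fun P hP hcover => ?_
  obtain ⟨U, hUP, hNU⟩ :=
    hcover (show (⟨N, hN⟩ : SecondSpec R M) ∈ Vs R M N from mem_Vs.2 le_rfl)
  obtain ⟨A, K, rfl⟩ := hP hUP
  have hlt : N ⊓ K < N := inf_le_left.lt_of_ne fun h => hNU.2 (inf_eq_left.mp h)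
  obtain ⟨Q, hQP, hQ, hQcover⟩ := (ih _ hlt).elim_finite_subcover_image
    (c := id) (fun V hV => TopologicalSpace.isOpen_generateFrom_of_mem (hP hV))
    (by simpa only [id, ← Set.sUnion_eq_biUnion] using
      (Vs_mono inf_le_left).trans hcover)
  refine ⟨insert _ Q, Set.insert_subset hUP hQP, hQ.insert _, ?_⟩
  rw [Set.sUnion_insert, Set.sUnion_eq_biUnion]
  exact (Vs_subset_Vs_inter_Ws_union_Vs_inf hNU.1 K).trans (Set.union_subset_union_right _ hQcover)

lemma isCompact_Vs_of_forall_lt {N : Submodule R M}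
    (ih : ∀ N' < N, @IsCompact _ (patchTopology R M) (Vs R M N')) :
    @IsCompact _ (patchTopology R M) (Vs R M N) := by
  let := patchTopology R M
  by_cases hN : IsSecondSubmodule R M N
  · exact isCompact_Vs_of_isSecondSubmodule hN ih
  by_cases hbot : N = ⊥
  · rw [hbot, Vs_bot]
    exact isCompact_empty
  obtain ⟨r, hrN, hr⟩ : ∃ r : R, r • N ≠ N ∧ r • N ≠ ⊥ := by
    simpa only [IsSecondSubmodule, hbot, ne_eq, not_false_eq_true, true_and, not_forall,
      not_or] using hN
  rw [Vs_eq_Vs_smul_union_Vs_inf_torsionBy r N]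
  refine (ih _ ((Submodule.smul_le_self_of_tower r N).lt_of_ne hrN)).union
    (ih _ (inf_le_left.lt_of_ne fun h => hr ?_))
  rw [smul_eq_bot_iff_le_torsionBy, ← h]
  exact inf_le_right

lemma wellFounded_secSocle_lt
    (hdcc : ∀ f : ℕ → Submodule R M, (∀ n, secSocle R M (f n) = f n) →
      (∀ n, f (n + 1) ≤ f n) → ∃ n, ∀ m, n ≤ m → f m = f n) :
    WellFounded fun N' N : Submodule R M => secSocle R M N' < secSocle R M N := by
  refine wellFounded_iff_isEmpty_descending_chain.2 ⟨fun ⟨f, hf⟩ => ?_⟩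
  obtain ⟨n, hn⟩ := hdcc (fun n => secSocle R M (f n)) (fun n => secSocle_secSocle _)
    (fun n => (hf n).le)
  exact (hf n).ne (hn (n + 1) n.le_succ)

end

/-- Thm 3.9: if `M` has dcc on socle submodules, then `Spec^s(M)` with the finer patch
topology is a compact space. -/
theorem stmt16
    (hdcc : ∀ f : ℕ → Submodule R M, (∀ n, secSocle R M (f n) = f n) →
      (∀ n, f (n + 1) ≤ f n) → ∃ n, ∀ m, n ≤ m → f m = f n) :
    @CompactSpace (SecondSpec R M) (patchTopology R M) := by
  let := patchTopology R M
  have hVs : ∀ N : Submodule R M, IsCompact (Vs R M N) := by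
    intro N
    induction N using (wellFounded_secSocle_lt hdcc).induction with
    | _ N ih =>
      rw [← Vs_secSocle]
      exact isCompact_Vs_of_forall_lt fun N' hN' => ih N' ((secSocle_le N').trans_lt hN')
  rw [← isCompact_univ_iff, ← Vs_top]
  exact hVs ⊤
end
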